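/- Semantics preservation for the incremental-update translation (core case of the soundness theorem): for the single-statement loop 'for i in L do V[key(i)] ⊕= val(i)', starting from state V₀, the denotational semantics (sequential fold of update transformers) equals the translated bulk program V₀ ◁ G, where G is the finite map sending each k in the image key(L) to V₀(k) ⊕ (⊕-aggregate of val over the group of i ∈ L with key(i) = k). -/

import Mathlib

/-! Coordinate `k` of the state is touched exactly by the items `i` with `key i = k`, each adding
`val i`, so it ends as `V₀ k` plus the aggregate of that group. When the group is empty the
aggregate is the empty sum `0`, which is why the guard of the bulk program is harmless. -/

theorem List.foldl_update_add_apply {I K M : Type*} [DecidableEq K] [AddMonoid M]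
    (key : I → K) (val : I → M) (L : List I) (V₀ : K → M) (k : K) :
    L.foldl (fun V i => Function.update V (key i) (V (key i) + val i)) V₀ k =
      V₀ k + ((L.filter (fun i => decide (key i = k))).map val).sum := by
  induction L generalizing V₀ with
  | nil => simp
  | cons a L ih =>
    by_cases h : key a = k
    · simp [ih, h, add_assoc]
    · simp [ih, h, Function.update_of_ne (Ne.symm h)]

theorem List.foldl_add_eq_sum_map {I M : Type*} [AddMonoid M] (val : I → M) (l : List I) :
    l.foldl (fun a i => a + val i) 0 = (l.map val).sum := by
  rw [List.sum_eq_foldl, List.foldl_map]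

theorem incremental_update_translation_sound {I K M : Type*} [DecidableEq K]
    [AddCommMonoid M] (key : I → K) (val : I → M) (L : List I) (V₀ : K → M) :
    List.foldl (fun V i => Function.update V (key i) (V (key i) + val i)) V₀ L =
      fun k =>
        if ∃ i ∈ L, key i = k then
          V₀ k + (L.filter (fun i => decide (key i = k))).foldl
              (fun a i => a + val i) 0
        else V₀ k := by
  funext k
  rw [List.foldl_update_add_apply, List.foldl_add_eq_sum_map]
  split_ifs with hk
  · rfl
  · have hgroup : L.filter (fun i => decide (key i = k)) = [] :=
      List.filter_eq_nil_iff.mpr fun i hi hik => hk ⟨i, hi, of_decide_eq_true hik⟩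
    rw [hgroup, List.map_nil, List.sum_nil, add_zero]
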